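/- arXiv:2506.01699 — 2 statements merged into one kernel-verified Lean document; each statement's English description precedes it below -/
import Mathlib

section
/- Let p be an odd prime. Identify F_p³ with symmetric 2×2 matrices over F_p via (a,b,ν) ↦ [[a,ν],[ν,b]], with Q equal to the determinant. The action of GL₂(F_p) on symmetric matrices given by h·M = det(h)⁻¹ · h M hᵗ is transitive on the set of nonzero symmetric matrices with determinant 0, and the stabilizer of [[1,0],[0,0]] is the subgroup generated by the unipotent matrix [[1,1],[0,1]] and the scalar matrices. -/
/-!
Up to the factor `det(h)⁻¹`, `h • E` for `E = [[1,0],[0,0]]` is the rank-one matrix `v vᵗ`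
built from the first column `v` of `h`. Every nonzero singular symmetric `[[a,ν],[ν,b]]` has
this form (take `v = (a, ν)`, or `v = (0, b)` when `a = 0`), so all of them lie in the orbit
of `E`. Reading off the entries, `h` fixes `E` iff it is upper triangular with equal diagonal
entries, i.e. `h = s • [[1,x],[0,1]]`, and over `F_p` the matrix `[[1,x],[0,1]]` is a power of
`[[1,1],[0,1]]`.
-/

open Matrix

section CommRing

variable {n R : Type*} [Fintype n] [DecidableEq n] [CommRing R]

noncomputable def twistedCongr (h : GL n R) (M : Matrix n n R) : Matrix n n R :=
  ((h⁻¹ : GL n R) : Matrix n n R).det • ((h : Matrix n n R) * M * (h : Matrix n n R)ᵀ)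

theorem twistedCongr_mul (g h : GL n R) (M : Matrix n n R) :
    twistedCongr (g * h) M = twistedCongr g (twistedCongr h M) := by
  simp only [twistedCongr, _root_.mul_inv_rev, Units.val_mul, det_mul, transpose_mul,
    smul_mul, Matrix.mul_smul, Matrix.mul_assoc, smul_smul]
  rw [mul_comm]

@[simp] theorem twistedCongr_one (M : Matrix n n R) : twistedCongr 1 M = M := by
  simp [twistedCongr]

def twistedStabilizer (M : Matrix n n R) : Subgroup (GL n R) where
  carrier := {h | twistedCongr h M = M}
  one_mem' := twistedCongr_one M
  mul_mem' {g h} (hg : twistedCongr g M = M) (hh : twistedCongr h M = M) := by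
    change twistedCongr (g * h) M = M
    rw [twistedCongr_mul, hh, hg]
  inv_mem' {h} (hh : twistedCongr h M = M) := by
    change twistedCongr h⁻¹ M = M
    conv_lhs => rw [← hh, ← twistedCongr_mul, inv_mul_cancel, twistedCongr_one]

end CommRing

section Field

variable {K : Type*} [Field K]

theorem det_coe_inv {n : Type*} [Fintype n] [DecidableEq n] (h : GL n K) :
    ((h⁻¹ : GL n K) : Matrix n n K).det = (h : Matrix n n K).det⁻¹ := by
  rw [GeneralLinearGroup.coe_inv, det_nonsing_inv, Ring.inverse_eq_inv']

theorem twistedCongr_E (h : GL (Fin 2) K) :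
    twistedCongr h !![1, 0; 0, 0] = (h : Matrix (Fin 2) (Fin 2) K).det⁻¹ •
      !![h 0 0 * h 0 0, h 0 0 * h 1 0; h 1 0 * h 0 0, h 1 0 * h 1 0] := by
  rw [twistedCongr, det_coe_inv]
  congr 1
  ext i j
  fin_cases i <;> fin_cases j <;> simp [Matrix.mul_apply, Fin.sum_univ_two]

theorem exists_twistedCongr_E_eq {M : Matrix (Fin 2) (Fin 2) K} (hM : M ≠ 0) (hMs : M.IsSymm)
    (hMd : M.det = 0) : ∃ h : GL (Fin 2) K, twistedCongr h !![1, 0; 0, 0] = M := by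
  obtain ⟨a, ν, b, rfl⟩ : ∃ a ν b, M = !![a, ν; ν, b] :=
    ⟨M 0 0, M 0 1, M 1 1, (eta_fin_two M).trans (by rw [hMs.apply 0 1])⟩
  simp only [det_fin_two_of] at hMd
  rcases eq_or_ne a 0 with rfl | ha
  · obtain rfl : ν = 0 := by simpa using hMd
    have hb : b ≠ 0 := by rintro rfl; exact hM (by ext i j; fin_cases i <;> fin_cases j <;> rfl)
    refine ⟨.mkOfDetNeZero !![0, -1; b, 0] (by simpa [det_fin_two_of] using hb), ?_⟩
    rw [twistedCongr_E]
    ext i j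
    fin_cases i <;> fin_cases j <;> simp [det_fin_two_of, hb]
  · refine ⟨.mkOfDetNeZero !![a, 0; ν, 1] (by simpa [det_fin_two_of] using ha), ?_⟩
    rw [twistedCongr_E]
    ext i j
    fin_cases i <;> fin_cases j <;> simp [det_fin_two_of, ha]
    · field_simp
    · field_simp
      linear_combination -hMd

theorem twistedCongr_E_eq_E_iff (h : GL (Fin 2) K) :
    twistedCongr h !![1, 0; 0, 0] = !![1, 0; 0, 0] ↔ h 1 0 = 0 ∧ h 1 1 = h 0 0 := by
  have hdet : h 0 0 * h 1 1 - h 0 1 * h 1 0 ≠ 0 := by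
    simpa [det_fin_two] using h.det_ne_zero
  rw [twistedCongr_E, det_fin_two]
  simp only [smul_of, smul_cons, smul_eq_mul, smul_empty, EmbeddingLike.apply_eq_iff_eq,
    vecCons_inj, mul_eq_zero, inv_eq_zero, and_true, or_self, hdet, false_or]
  constructor
  · rintro ⟨⟨hsq, -⟩, -, h10⟩
    rw [h10, mul_zero, sub_zero] at hsq hdet
    rw [inv_mul_eq_one₀ hdet] at hsq
    exact ⟨h10, mul_left_cancel₀ (left_ne_zero_of_mul hdet) hsq⟩
  · rintro ⟨h10, h11⟩
    have h00 : h 0 0 ≠ 0 := by simpa [h10, h11] using hdet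
    simp only [h10, h11, mul_zero, sub_zero, _root_.mul_inv_rev, h00, or_true, and_true, or_false,
      and_self]
    field_simp

open Matrix.GeneralLinearGroup in
theorem exists_eq_scalar_mul_upperRightHom {h : GL (Fin 2) K} (h10 : h 1 0 = 0)
    (h11 : h 1 1 = h 0 0) : ∃ (u : Kˣ) (x : K), h = scalar (Fin 2) u * upperRightHom x := by
  have h00 : h 0 0 ≠ 0 := by simpa [det_fin_two, h10, h11] using h.det_ne_zero
  refine ⟨Units.mk0 _ h00, h 0 1 / h 0 0, GeneralLinearGroup.ext fun i j => ?_⟩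
  fin_cases i <;> fin_cases j <;> simp [h10, h11, h00, mul_div_cancel₀]

end Field

open Matrix.GeneralLinearGroup in
theorem upperRightHom_eq_pow_val {n : ℕ} [NeZero n] (x : ZMod n) :
    upperRightHom x = upperRightHom 1 ^ x.val := by
  rw [← AddChar.map_nsmul_eq_pow, nsmul_one, ZMod.natCast_zmod_val]

theorem twistedStabilizer_E_eq_closure (p : ℕ) [Fact p.Prime] :
    twistedStabilizer !![(1 : ZMod p), 0; 0, 0] = Subgroup.closure
      {h : GL (Fin 2) (ZMod p) | (h : Matrix (Fin 2) (Fin 2) (ZMod p)) = !![1, 1; 0, 1] ∨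
        ∃ c : ZMod p,
          (h : Matrix (Fin 2) (Fin 2) (ZMod p)) = c • (1 : Matrix (Fin 2) (Fin 2) (ZMod p))} := by
  apply le_antisymm
  · intro h hh
    obtain ⟨h10, h11⟩ := (twistedCongr_E_eq_E_iff h).1 hh
    obtain ⟨u, x, rfl⟩ := exists_eq_scalar_mul_upperRightHom h10 h11
    refine mul_mem (Subgroup.subset_closure (Or.inr ⟨u, ?_⟩)) ?_
    · simp [Matrix.smul_one_eq_diagonal]
    · rw [upperRightHom_eq_pow_val]
      exact pow_mem (Subgroup.subset_closure (.inl rfl)) _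
  · rw [Subgroup.closure_le]
    rintro h (hU | ⟨c, hc⟩) <;> refine (twistedCongr_E_eq_E_iff h).2 ?_
    · simp [hU]
    · simp [hc]

theorem stmt_2_general (p : ℕ) (hp : p.Prime) :
    haveI : Fact p.Prime := ⟨hp⟩
    let act : GL (Fin 2) (ZMod p) → Matrix (Fin 2) (Fin 2) (ZMod p) →
        Matrix (Fin 2) (Fin 2) (ZMod p) :=
      fun h M =>
        ((h⁻¹ : GL (Fin 2) (ZMod p)) : Matrix (Fin 2) (Fin 2) (ZMod p)).det •
          ((h : Matrix (Fin 2) (Fin 2) (ZMod p)) * M *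
            Matrix.transpose (h : Matrix (Fin 2) (Fin 2) (ZMod p)))
    (∀ M N : Matrix (Fin 2) (Fin 2) (ZMod p),
        M ≠ 0 → M.IsSymm → M.det = 0 → N ≠ 0 → N.IsSymm → N.det = 0 →
        ∃ h : GL (Fin 2) (ZMod p), act h M = N)
    ∧ {h : GL (Fin 2) (ZMod p) | act h !![(1 : ZMod p), 0; 0, 0] = !![1, 0; 0, 0]}
        = (Subgroup.closure
            {h : GL (Fin 2) (ZMod p) |
              (h : Matrix (Fin 2) (Fin 2) (ZMod p)) = !![1, 1; 0, 1]
              ∨ ∃ c : ZMod p,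
                  (h : Matrix (Fin 2) (Fin 2) (ZMod p))
                    = c • (1 : Matrix (Fin 2) (Fin 2) (ZMod p))} : Set _) := by
  have : Fact p.Prime := ⟨hp⟩
  refine ⟨fun M N hM hMs hMd hN hNs hNd => ?_,
    congrArg SetLike.coe (twistedStabilizer_E_eq_closure p)⟩
  obtain ⟨g, rfl⟩ := exists_twistedCongr_E_eq hM hMs hMd
  obtain ⟨k, rfl⟩ := exists_twistedCongr_E_eq hN hNs hNd
  refine ⟨k * g⁻¹, ?_⟩
  change twistedCongr _ _ = _
  rw [twistedCongr_mul, ← twistedCongr_mul g⁻¹, inv_mul_cancel, twistedCongr_one]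

/-- Let `p` be an odd prime. `GL₂(F_p)` acts on symmetric `2×2` matrices by
`h·M = det(h)⁻¹ · h M hᵗ`. This action is transitive on the nonzero symmetric
matrices of determinant `0`, and the stabilizer of `[[1,0],[0,0]]` is the subgroup
generated by the unipotent matrix `[[1,1],[0,1]]` and the scalar matrices. -/
theorem stmt_2 (p : ℕ) (hp : p.Prime) (hodd : Odd p) :
    haveI : Fact p.Prime := ⟨hp⟩
    let act : GL (Fin 2) (ZMod p) → Matrix (Fin 2) (Fin 2) (ZMod p) →
        Matrix (Fin 2) (Fin 2) (ZMod p) :=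
      fun h M =>
        ((h⁻¹ : GL (Fin 2) (ZMod p)) : Matrix (Fin 2) (Fin 2) (ZMod p)).det •
          ((h : Matrix (Fin 2) (Fin 2) (ZMod p)) * M *
            Matrix.transpose (h : Matrix (Fin 2) (Fin 2) (ZMod p)))
    (∀ M N : Matrix (Fin 2) (Fin 2) (ZMod p),
        M ≠ 0 → M.IsSymm → M.det = 0 → N ≠ 0 → N.IsSymm → N.det = 0 →
        ∃ h : GL (Fin 2) (ZMod p), act h M = N)
    ∧ {h : GL (Fin 2) (ZMod p) | act h !![(1 : ZMod p), 0; 0, 0] = !![1, 0; 0, 0]}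
        = (Subgroup.closure
            {h : GL (Fin 2) (ZMod p) |
              (h : Matrix (Fin 2) (Fin 2) (ZMod p)) = !![1, 1; 0, 1]
              ∨ ∃ c : ZMod p,
                  (h : Matrix (Fin 2) (Fin 2) (ZMod p))
                    = c • (1 : Matrix (Fin 2) (Fin 2) (ZMod p))} : Set _) :=
  stmt_2_general p hp
end

section
/- For every real c > 0, the integral over the upper half plane ∫∫_{y>0, x∈R} exp(−πc(x² + y² + 1)/y) dx dy / y² equals e^{−2πc}/c. -/
/-!
The Gaussian integral in `x` leaves `√(y / c) e^{-a(y + 1/y)}` with `a = πc`, so it remains to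
show `∫₀^∞ e^{-a(y + 1/y)} y^{-3/2} dy = √(π/a) e^{-2a}`. The substitution `y = t⁻²` turns this
into `2 ∫₀^∞ E t dt` with `E t = e^{-a(t² + t⁻²)}`. Since `E (1/t) = E t`, the inversion `t ↦ 1/t`
shows `∫₀^∞ E = ∫₀^∞ t⁻² E`, so `2 ∫₀^∞ E = ∫₀^∞ (1 + t⁻²) e^{-a((t - 1/t)² + 2)} dt`, and the
substitution `u = t - 1/t`, a bijection `(0, ∞) → ℝ` with derivative `1 + t⁻²`, turns this into
the Gaussian integral `e^{-2a} ∫ e^{-au²} du`.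
-/

open Real MeasureTheory Set

section Substitutions

variable {E : Type*} [NormedAddCommGroup E] [NormedSpace ℝ E]

lemma strictMonoOn_sub_inv_Ioi : StrictMonoOn (fun t : ℝ => t - t⁻¹) (Ioi 0) := by
  intro s hs t ht hst
  have : t⁻¹ < s⁻¹ := inv_strictAntiOn hs ht hst
  simp only
  linarith

lemma image_sub_inv_Ioi : (fun t : ℝ => t - t⁻¹) '' Ioi 0 = univ := by
  refine eq_univ_of_forall fun u => ?_
  have hd : √(u ^ 2 + 4) ^ 2 = u ^ 2 + 4 := sq_sqrt (by positivity)
  have hu : |u| < √(u ^ 2 + 4) := by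
    rw [← sqrt_sq_eq_abs]; exact sqrt_lt_sqrt (sq_nonneg u) (by linarith)
  -- the positive root of `t ^ 2 - u * t - 1`
  set t := (u + √(u ^ 2 + 4)) / 2 with ht_def
  have ht : 0 < t := by linarith [neg_abs_le u]
  have hquad : t ^ 2 = u * t + 1 := by rw [ht_def]; linear_combination hd / 4
  refine ⟨t, ht, ?_⟩
  clear_value t
  field_simp
  linear_combination hquad

lemma hasDerivAt_sub_inv {t : ℝ} (ht : t ≠ 0) :
    HasDerivAt (fun t : ℝ => t - t⁻¹) (1 + (t ^ 2)⁻¹) t :=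
  ((hasDerivAt_id' t).sub (hasDerivAt_inv ht)).congr_deriv (by ring)

lemma hasDerivWithinAt_sub_inv_Ioi {t : ℝ} (ht : t ∈ Ioi 0) :
    HasDerivWithinAt (fun t : ℝ => t - t⁻¹) (1 + (t ^ 2)⁻¹) (Ioi 0) t :=
  (hasDerivAt_sub_inv (ne_of_gt ht)).hasDerivWithinAt

theorem integral_Ioi_comp_sub_inv (f : ℝ → E) :
    ∫ t in Ioi 0, (1 + (t ^ 2)⁻¹) • f (t - t⁻¹) = ∫ u, f u := calc
  _ = ∫ t in Ioi 0, |1 + (t ^ 2)⁻¹| • f (t - t⁻¹) :=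
    setIntegral_congr_fun measurableSet_Ioi fun t _ => by rw [abs_of_pos (by positivity)]
  _ = ∫ u in (fun t => t - t⁻¹) '' Ioi 0, f u :=
    (integral_image_eq_integral_abs_deriv_smul measurableSet_Ioi
      (fun _ => hasDerivWithinAt_sub_inv_Ioi) strictMonoOn_sub_inv_Ioi.injOn f).symm
  _ = ∫ u, f u := by rw [image_sub_inv_Ioi, setIntegral_univ]

theorem integrableOn_Ioi_comp_sub_inv_iff (f : ℝ → E) :
    IntegrableOn (fun t => (1 + (t ^ 2)⁻¹) • f (t - t⁻¹)) (Ioi 0) ↔ Integrable f := by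
  rw [← integrableOn_univ, ← image_sub_inv_Ioi, integrableOn_image_iff_integrableOn_abs_deriv_smul
    measurableSet_Ioi (fun _ => hasDerivWithinAt_sub_inv_Ioi) strictMonoOn_sub_inv_Ioi.injOn]
  refine integrableOn_congr_fun (fun t _ => ?_) measurableSet_Ioi
  rw [abs_of_pos (by positivity)]

theorem integral_Ioi_inv_sq_smul_comp_inv (f : ℝ → E) :
    ∫ t in Ioi 0, (t ^ 2)⁻¹ • f t⁻¹ = ∫ t in Ioi 0, f t := by
  rw [← integral_comp_rpow_Ioi f (p := -1) (by norm_num)]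
  refine setIntegral_congr_fun measurableSet_Ioi fun t ht => ?_
  norm_num [rpow_neg (le_of_lt ht)]

end Substitutions

lemma integrable_exp_neg_mul_sq_add_inv_sq {a : ℝ} (ha : 0 < a) :
    Integrable fun t : ℝ => exp (-a * (t ^ 2 + (t ^ 2)⁻¹)) := by
  refine (integrable_exp_neg_mul_sq ha).mono' (by fun_prop) (.of_forall fun t => ?_)
  rw [norm_of_nonneg (exp_pos _).le, exp_le_exp]
  have : 0 ≤ a * (t ^ 2)⁻¹ := by positivity
  linarith

theorem integral_Ioi_exp_neg_mul_sq_add_inv_sq {a : ℝ} (ha : 0 < a) :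
    ∫ t in Ioi 0, exp (-a * (t ^ 2 + (t ^ 2)⁻¹)) = √(π / a) * exp (-(2 * a)) / 2 := by
  set E : ℝ → ℝ := fun t => exp (-a * (t ^ 2 + (t ^ 2)⁻¹))
  set G : ℝ → ℝ := fun u => exp (-(2 * a)) * exp (-a * u ^ 2)
  have hEG : ∀ t ∈ Ioi (0 : ℝ), (1 + (t ^ 2)⁻¹) * E t = (1 + (t ^ 2)⁻¹) • G (t - t⁻¹) := by
    intro t ht
    have : t ≠ 0 := ne_of_gt ht
    simp only [E, G, smul_eq_mul, ← exp_add]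
    congr 2
    field_simp
    ring
  have hsum : ∫ t in Ioi 0, (1 + (t ^ 2)⁻¹) * E t = √(π / a) * exp (-(2 * a)) := by
    rw [setIntegral_congr_fun measurableSet_Ioi hEG, integral_Ioi_comp_sub_inv,
      integral_const_mul, integral_gaussian, mul_comm]
  have hsum_int : IntegrableOn (fun t => (1 + (t ^ 2)⁻¹) * E t) (Ioi 0) :=
    ((integrableOn_Ioi_comp_sub_inv_iff G).2 ((integrable_exp_neg_mul_sq ha).const_mul _)).congr_fun
      (fun t ht => (hEG t ht).symm) measurableSet_Ioi
  have hinv : ∫ t in Ioi 0, (t ^ 2)⁻¹ * E t = ∫ t in Ioi 0, E t := by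
    rw [← integral_Ioi_inv_sq_smul_comp_inv E]
    congr! 3 with t
    simp only [E, inv_pow, inv_inv, add_comm]
  have hsplit : ∫ t in Ioi 0, (t ^ 2)⁻¹ * E t
      = (∫ t in Ioi 0, (1 + (t ^ 2)⁻¹) * E t) - ∫ t in Ioi 0, E t := by
    rw [← integral_sub hsum_int (integrable_exp_neg_mul_sq_add_inv_sq ha).integrableOn]
    congr! 2 with t
    ring
  linarith

theorem integral_Ioi_exp_neg_mul_add_inv_div_mul_sqrt {a : ℝ} (ha : 0 < a) :
    ∫ y in Ioi 0, exp (-a * (y + y⁻¹)) / (y * √y) = √(π / a) * exp (-(2 * a)) := by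
  rw [← integral_comp_rpow_Ioi _ (p := -2) (by norm_num)]
  calc _ = ∫ t in Ioi 0, 2 * exp (-a * (t ^ 2 + (t ^ 2)⁻¹)) := by
        refine setIntegral_congr_fun measurableSet_Ioi fun t ht => ?_
        have ht : 0 < t := ht
        norm_num [rpow_neg ht.le, sqrt_inv, sqrt_sq ht.le, add_comm]
        field_simp
    _ = _ := by rw [integral_const_mul, integral_Ioi_exp_neg_mul_sq_add_inv_sq ha]; ring

lemma integral_exp_neg_pi_mul_sq_add_sq_add_one_div (c y : ℝ) :
    ∫ x : ℝ, exp (-(π * c * (x ^ 2 + y ^ 2 + 1) / y)) = √(y / c) * exp (-(π * c) * (y + y⁻¹)) := by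
  have hfactor : ∀ x : ℝ, exp (-(π * c * (x ^ 2 + y ^ 2 + 1) / y))
      = exp (-(π * c / y) * x ^ 2) * exp (-(π * c) * (y + y⁻¹)) := by
    intro x
    rw [← exp_add]
    congr 1
    field_simp
    ring
  simp_rw [hfactor]
  rw [integral_mul_const, integral_gaussian, div_div_eq_mul_div, mul_div_mul_left _ _ pi_ne_zero]

open Real MeasureTheory in
/-- For every real `c > 0`,
`∫∫_{y>0, x∈ℝ} exp(−πc(x² + y² + 1)/y) dx dy / y² = e^{−2πc}/c`. -/
theorem stmt_9 (c : ℝ) (hc : 0 < c) :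
    ∫ y in Set.Ioi (0 : ℝ),
      (∫ x : ℝ, Real.exp (-(π * c * (x ^ 2 + y ^ 2 + 1) / y))) / y ^ 2
      = Real.exp (-(2 * π * c)) / c := by
  have hinner : ∀ y ∈ Ioi (0 : ℝ), (∫ x : ℝ, exp (-(π * c * (x ^ 2 + y ^ 2 + 1) / y))) / y ^ 2
      = (√c)⁻¹ * (exp (-(π * c) * (y + y⁻¹)) / (y * √y)) := by
    intro y hy
    have hy : 0 < y := hy
    rw [integral_exp_neg_pi_mul_sq_add_sq_add_one_div c y, sqrt_div hy.le]
    field_simp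
    exact sq_sqrt hy.le
  rw [setIntegral_congr_fun measurableSet_Ioi hinner, integral_const_mul,
    integral_Ioi_exp_neg_mul_add_inv_div_mul_sqrt (by positivity), div_mul_cancel_left₀ pi_ne_zero,
    sqrt_inv, ← mul_assoc, ← mul_inv, mul_self_sqrt hc.le, inv_mul_eq_div, mul_assoc]
end
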